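/- arXiv:2012.07068 — 6 statements merged into one kernel-verified Lean document; each statement's English description precedes it below -/
import Mathlib

section
/- For 0 < ν < 1 and t > 0, the two series representations of the Mainardi function M_ν agree: ∑_{k=0}^∞ (-t)^k / (k! · Γ(-ν(k+1)+1)) = (1/π) ∑_{k=1}^∞ ((-t)^{k-1} / (k-1)!) · Γ(νk) · sin(πνk). -/
open Real MeasureTheory Set

/- The series agree term by term: this is Euler's reflection formula `Γ(s) Γ(1 - s) = π / sin(π s)`
at `s = ν (k + 1) > 0`, read as a formula for `1 / Γ(1 - s)`. -/

-- No case split at integer `s`: there `Γ(1 - s) = 0` and `π / sin (π s) = 0` as junk values.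
theorem Real.inv_Gamma_one_sub {s : ℝ} (hs : Gamma s ≠ 0) :
    (Gamma (1 - s))⁻¹ = Gamma s * sin (π * s) / π :=
  calc (Gamma (1 - s))⁻¹ = Gamma s * (Gamma s * Gamma (1 - s))⁻¹ := by
        rw [mul_inv, mul_inv_cancel_left₀ hs]
    _ = Gamma s * sin (π * s) / π := by
        rw [Gamma_mul_Gamma_one_sub, inv_div, mul_div_assoc]

theorem mainardi_M_series_agree_general (ν t : ℝ) (hν0 : 0 < ν) :
    ∑' k : ℕ, (-t) ^ k / (k.factorial * Real.Gamma (-ν * (k + 1) + 1)) =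
      (1 / π) * ∑' k : ℕ,
        ((-t) ^ k / k.factorial) * Real.Gamma (ν * (k + 1)) * Real.sin (π * ν * (k + 1)) := by
  rw [← tsum_mul_left]
  refine tsum_congr fun k => ?_
  have hreflect := inv_Gamma_one_sub (Gamma_pos_of_pos (by positivity : 0 < ν * (k + 1))).ne'
  rw [show -ν * (k + 1) + 1 = 1 - ν * (k + 1) by ring, div_eq_mul_inv, mul_inv, hreflect,
    mul_assoc π]
  ring

theorem mainardi_M_series_agree (ν t : ℝ) (hν0 : 0 < ν) (hν1 : ν < 1) (ht : 0 < t) :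
    ∑' k : ℕ, (-t) ^ k / (k.factorial * Real.Gamma (-ν * (k + 1) + 1)) =
      (1 / π) * ∑' k : ℕ,
        ((-t) ^ k / k.factorial) * Real.Gamma (ν * (k + 1)) * Real.sin (π * ν * (k + 1)) :=
  mainardi_M_series_agree_general ν t hν0
end

section
/- For 0 < ν < 1 and all t, the Mainardi functions satisfy F_ν(t) = ν · t · M_ν(t). -/
open Real MeasureTheory Set

noncomputable def mainardiF (ν t : ℝ) : ℝ :=
  ∑' k : ℕ, (-t) ^ (k + 1) / ((k + 1).factorial * Real.Gamma (-ν * (k + 1)))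

noncomputable def mainardiM (ν t : ℝ) : ℝ :=
  ∑' k : ℕ, (-t) ^ k / (k.factorial * Real.Gamma (-ν * (k + 1) + 1))

/-- Needs no `s ≠ 0`: at `s = 0` both sides vanish, since Mathlib sets `Γ 0 = 0`. -/
theorem Real.inv_Gamma_eq_self_mul_inv_Gamma_add_one (s : ℝ) :
    (Gamma s)⁻¹ = s * (Gamma (s + 1))⁻¹ := by
  rcases ne_or_eq s 0 with hs | rfl
  · rw [Gamma_add_one hs, mul_inv, mul_inv_cancel_left₀ hs]
  · rw [Gamma_zero, inv_zero, zero_mul]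

theorem mainardiF_term_eq_mul_mainardiM_term (ν t : ℝ) (k : ℕ) :
    (-t) ^ (k + 1) / ((k + 1).factorial * Gamma (-ν * (k + 1))) =
      ν * t * ((-t) ^ k / (k.factorial * Gamma (-ν * (k + 1) + 1))) := by
  rw [div_eq_mul_inv, mul_inv, inv_Gamma_eq_self_mul_inv_Gamma_add_one, Nat.factorial_succ]
  push_cast
  field_simp
  ring

theorem mainardi_F_eq_nu_t_M_general (ν : ℝ) (t : ℝ) :
    mainardiF ν t = ν * t * mainardiM ν t := by
  rw [mainardiF, mainardiM, ← tsum_mul_left]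
  exact tsum_congr (mainardiF_term_eq_mul_mainardiM_term ν t)

theorem mainardi_F_eq_nu_t_M (ν : ℝ) (hν0 : 0 < ν) (hν1 : ν < 1) (t : ℝ) :
    mainardiF ν t = ν * t * mainardiM ν t :=
  mainardi_F_eq_nu_t_M_general ν t
end

section
/- Let 0 < ν < 1 and μ < 1, and f_{ν,μ} the inverse Laplace transform of s^{-μ}e^{-s^ν}. Then t · f_{ν,μ-1}(t) = (μ-1) f_{ν,μ}(t) + ν f_{ν,μ-ν}(t) for all t > 0; equivalently, t · d f_{ν,μ}(t)/dt = (μ-1) f_{ν,μ}(t) + ν f_{ν,μ-ν}(t). -/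
/-!
Differentiating under the integral sign in `t` multiplies the integrand by `-u`, which is the
shift `ρ ↦ ρ - 1`; hence `f_{ν,μ}' = f_{ν,μ-1}` and the two identities coincide. The first one
says that the integral over `(0, ∞)` of the `u`-derivative of the integrand of `f_{ν,μ-1}`
vanishes: that derivative is `(μ - 1)`, `-t` and `ν` times the integrands of `f_{ν,μ}`,
`f_{ν,μ-1}`, `f_{ν,μ-ν}`, and the integrand of `f_{ν,μ-1}` is `0` at `u = 0` because `μ < 1`
and tends to `0` at infinity because `t > 0`. Every domination comes from `u^ν ≤ a u + C_a`,
valid for each `a > 0` because `ν < 1`.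
-/

open Real MeasureTheory Set

noncomputable def fInv (ν ρ t : ℝ) : ℝ :=
  (1 / π) * ∫ u in Ioi (0 : ℝ),
    u ^ (-ρ) * Real.exp (-u * t - u ^ ν * Real.cos (π * ν)) *
      Real.sin (u ^ ν * Real.sin (π * ν) + π * ρ)

open Filter Topology

lemma rpow_le_mul_add {ν a u : ℝ} (hν0 : 0 ≤ ν) (hν1 : ν < 1) (ha : 0 < a) (hu : 0 ≤ u) :
    u ^ ν ≤ a * u + (a ^ (-(1 - ν)⁻¹)) ^ ν := by
  -- `K` is the point beyond which `u ^ (ν - 1) ≤ a`.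
  set K := a ^ (-(1 - ν)⁻¹)
  have hK : 0 < K := rpow_pos_of_pos ha _
  rcases le_total u K with huK | hKu
  · nlinarith [rpow_le_rpow hu huK hν0, mul_nonneg ha.le hu]
  · have hu0 : 0 < u := hK.trans_le hKu
    have hKa : K ^ (ν - 1) = a := by
      rw [← rpow_mul ha.le, neg_mul, ← mul_neg, neg_sub,
        inv_mul_cancel₀ (by linarith), rpow_one]
    calc u ^ ν = u ^ (ν - 1) * u := by rw [rpow_sub_one hu0.ne', div_mul_cancel₀ _ hu0.ne']
      _ ≤ K ^ (ν - 1) * u :=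
        mul_le_mul_of_nonneg_right (rpow_le_rpow_of_nonpos hK hKu (by linarith)) hu
      _ ≤ a * u + K ^ ν := by rw [hKa]; exact le_add_of_nonneg_right (rpow_nonneg hK.le _)

lemma integrableOn_rpow_mul_exp_neg_mul {s b : ℝ} (hs : -1 < s) (hb : 0 < b) :
    IntegrableOn (fun u : ℝ => u ^ s * exp (-b * u)) (Ioi 0) := by
  simpa only [rpow_one] using integrableOn_rpow_mul_exp_neg_mul_rpow hs one_pos hb

noncomputable def fInvIntegrand (ν ρ t u : ℝ) : ℝ :=
  u ^ (-ρ) * exp (-u * t - u ^ ν * cos (π * ν)) * sin (u ^ ν * sin (π * ν) + π * ρ)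

lemma fInv_eq_integral (ν ρ t : ℝ) :
    fInv ν ρ t = (1 / π) * ∫ u in Ioi 0, fInvIntegrand ν ρ t u := rfl

lemma sin_add_pi_mul_sub_one (z ρ : ℝ) : sin (z + π * (ρ - 1)) = -sin (z + π * ρ) := by
  rw [mul_sub_one, ← add_sub_assoc, sin_sub_pi]

lemma cos_add_pi_mul_sub_one (z ρ : ℝ) : cos (z + π * (ρ - 1)) = -cos (z + π * ρ) := by
  rw [mul_sub_one, ← add_sub_assoc, cos_sub_pi]

section Integrand

variable {ν ρ t u : ℝ}

lemma abs_fInvIntegrand_le (hu : 0 ≤ u) :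
    |fInvIntegrand ν ρ t u| ≤ u ^ (-ρ) * exp (u ^ ν - u * t) := by
  have hcos : -(u ^ ν * cos (π * ν)) ≤ u ^ ν := by
    nlinarith [neg_one_le_cos (π * ν), rpow_nonneg hu ν]
  rw [fInvIntegrand, abs_mul, abs_mul, abs_of_nonneg (rpow_nonneg hu _), abs_exp]
  calc _ ≤ u ^ (-ρ) * exp (-u * t - u ^ ν * cos (π * ν)) :=
        mul_le_of_le_one_right (by positivity) (abs_sin_le_one _)
    _ ≤ u ^ (-ρ) * exp (u ^ ν - u * t) :=
        mul_le_mul_of_nonneg_left (exp_le_exp.2 (by linarith)) (rpow_nonneg hu _)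

lemma exists_abs_fInvIntegrand_le (hν0 : 0 ≤ ν) (hν1 : ν < 1) {b : ℝ} (hb : 0 < b) :
    ∃ C, ∀ ρ t u, 2 * b ≤ t → 0 ≤ u →
      |fInvIntegrand ν ρ t u| ≤ C * (u ^ (-ρ) * exp (-b * u)) := by
  refine ⟨exp ((b ^ (-(1 - ν)⁻¹)) ^ ν), fun ρ t u ht hu => ?_⟩
  have hsub := rpow_le_mul_add hν0 hν1 hb hu
  calc |fInvIntegrand ν ρ t u| ≤ u ^ (-ρ) * exp (u ^ ν - u * t) := abs_fInvIntegrand_le hu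
    _ ≤ u ^ (-ρ) * exp ((b ^ (-(1 - ν)⁻¹)) ^ ν + -b * u) :=
      mul_le_mul_of_nonneg_left (exp_le_exp.2 (by nlinarith)) (rpow_nonneg hu _)
    _ = _ := by rw [exp_add]; ring

lemma continuousOn_fInvIntegrand : ContinuousOn (fInvIntegrand ν ρ t) (Ioi 0) := by
  unfold fInvIntegrand
  fun_prop (disch := intro; simp_all [ne_of_gt])

lemma integrableOn_fInvIntegrand (hν0 : 0 ≤ ν) (hν1 : ν < 1) (hρ : ρ < 1) (ht : 0 < t) :
    IntegrableOn (fInvIntegrand ν ρ t) (Ioi 0) := by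
  obtain ⟨C, hC⟩ := exists_abs_fInvIntegrand_le hν0 hν1 (half_pos ht)
  have hdom : IntegrableOn (fun u => C * (u ^ (-ρ) * exp (-(t / 2) * u))) (Ioi 0) :=
    (integrableOn_rpow_mul_exp_neg_mul (by linarith) (half_pos ht)).const_mul C
  refine hdom.mono' (continuousOn_fInvIntegrand.aestronglyMeasurable measurableSet_Ioi) ?_
  filter_upwards [self_mem_ae_restrict measurableSet_Ioi] with u hu
  exact hC ρ t u (by linarith) (le_of_lt hu)

lemma tendsto_fInvIntegrand_atTop (hν0 : 0 ≤ ν) (hν1 : ν < 1) (ht : 0 < t) :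
    Tendsto (fInvIntegrand ν ρ t) atTop (𝓝 0) := by
  obtain ⟨C, hC⟩ := exists_abs_fInvIntegrand_le hν0 hν1 (half_pos ht)
  have hdom := (tendsto_rpow_mul_exp_neg_mul_atTop_nhds_zero (-ρ) _ (half_pos ht)).const_mul C
  rw [mul_zero] at hdom
  refine squeeze_zero_norm' ?_ hdom
  filter_upwards [eventually_ge_atTop 0] with u hu
  exact hC ρ t u (by linarith) hu

lemma fInvIntegrand_zero (hρ : ρ ≠ 0) : fInvIntegrand ν ρ t 0 = 0 := by
  simp [fInvIntegrand, zero_rpow (neg_ne_zero.2 hρ)]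

lemma continuousAt_fInvIntegrand_zero (hν : 0 ≤ ν) (hρ : ρ < 0) :
    ContinuousAt (fInvIntegrand ν ρ t) 0 := by
  unfold fInvIntegrand
  fun_prop (disch := first | (right; linarith) | (right; assumption))

lemma fInvIntegrand_sub_one (hu : 0 < u) :
    fInvIntegrand ν (ρ - 1) t u = -(u * fInvIntegrand ν ρ t u) := by
  rw [fInvIntegrand, fInvIntegrand, sin_add_pi_mul_sub_one, neg_sub', sub_neg_eq_add, add_comm,
    rpow_add hu, rpow_one]
  ring

lemma hasDerivAt_fInvIntegrand_time (hu : 0 < u) :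
    HasDerivAt (fInvIntegrand ν ρ · u) (fInvIntegrand ν (ρ - 1) t u) t := by
  rw [fInvIntegrand_sub_one hu]
  have hexp := (((hasDerivAt_id t).const_mul (-u)).sub_const (u ^ ν * cos (π * ν))).exp
  refine ((hexp.const_mul (u ^ (-ρ))).mul_const
    (sin (u ^ ν * sin (π * ν) + π * ρ))).congr_deriv ?_
  simp only [fInvIntegrand, id]
  ring

lemma hasDerivAt_fInvIntegrand {μ : ℝ} (hu : 0 < u) :
    HasDerivAt (fInvIntegrand ν (μ - 1) t) ((μ - 1) * fInvIntegrand ν μ t u -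
      t * fInvIntegrand ν (μ - 1) t u + ν * fInvIntegrand ν (μ - ν) t u) u := by
  have hpow := hasDerivAt_rpow_const (p := -(μ - 1)) (Or.inl hu.ne')
  have hν := hasDerivAt_rpow_const (p := ν) (Or.inl hu.ne')
  have hexp := (((hasDerivAt_neg u).mul_const t).sub (hν.mul_const (cos (π * ν)))).exp
  have hsin := ((hν.mul_const (sin (π * ν))).add_const (π * (μ - 1))).sin
  refine ((hpow.mul hexp).mul hsin).congr_deriv ?_
  have hpow₁ : u ^ (-(μ - 1) - 1) = u ^ (-μ) := by ring_nf
  have hpow₂ : u ^ (-(μ - ν)) = u ^ (-(μ - 1)) * u ^ (ν - 1) := by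
    rw [← rpow_add hu]; ring_nf
  have hsin_sub (z : ℝ) : sin (z + π * (μ - ν)) =
      sin (z + π * μ) * cos (π * ν) - cos (z + π * μ) * sin (π * ν) := by
    rw [mul_sub, ← add_sub_assoc, sin_sub]
  simp only [fInvIntegrand, Pi.sub_apply, Pi.mul_apply, hpow₁, hpow₂, sin_add_pi_mul_sub_one,
    cos_add_pi_mul_sub_one, hsin_sub]
  ring

end Integrand

lemma integral_fInvIntegrand_recurrence {ν μ t : ℝ} (hν0 : 0 ≤ ν) (hν1 : ν < 1) (hμ : μ < 1)
    (ht : 0 < t) :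
    t * ∫ u in Ioi 0, fInvIntegrand ν (μ - 1) t u =
      (μ - 1) * (∫ u in Ioi 0, fInvIntegrand ν μ t u) +
        ν * ∫ u in Ioi 0, fInvIntegrand ν (μ - ν) t u := by
  have hint₀ := integrableOn_fInvIntegrand hν0 hν1 hμ ht
  have hint₁ := integrableOn_fInvIntegrand (ρ := μ - 1) hν0 hν1 (by linarith) ht
  have hint₂ := integrableOn_fInvIntegrand (ρ := μ - ν) hν0 hν1 (by linarith) ht
  have hFTC := integral_Ioi_of_hasDerivAt_of_tendsto
    (continuousAt_fInvIntegrand_zero hν0 (by linarith : μ - 1 < 0)).continuousWithinAt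
    (fun u hu => hasDerivAt_fInvIntegrand hu)
    (((hint₀.const_mul (μ - 1)).sub (hint₁.const_mul t)).add (hint₂.const_mul ν))
    (tendsto_fInvIntegrand_atTop hν0 hν1 ht)
  have hint₀₁ : IntegrableOn
      (fun u => (μ - 1) * fInvIntegrand ν μ t u - t * fInvIntegrand ν (μ - 1) t u) (Ioi 0) :=
    (hint₀.const_mul _).sub (hint₁.const_mul _)
  rw [fInvIntegrand_zero (by linarith), sub_zero, integral_add hint₀₁ (hint₂.const_mul _),
    integral_sub (hint₀.const_mul _) (hint₁.const_mul _),
    integral_const_mul, integral_const_mul, integral_const_mul] at hFTC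
  linarith

lemma mul_fInv_sub_one {ν μ t : ℝ} (hν0 : 0 ≤ ν) (hν1 : ν < 1) (hμ : μ < 1) (ht : 0 < t) :
    t * fInv ν (μ - 1) t = (μ - 1) * fInv ν μ t + ν * fInv ν (μ - ν) t := by
  simp only [fInv_eq_integral]
  linear_combination (1 / π) * integral_fInvIntegrand_recurrence hν0 hν1 hμ ht

lemma hasDerivAt_fInv {ν ρ t : ℝ} (hν0 : 0 ≤ ν) (hν1 : ν < 1) (hρ : ρ < 1) (ht : 0 < t) :
    HasDerivAt (fInv ν ρ) (fInv ν (ρ - 1) t) t := by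
  obtain ⟨C, hC⟩ := exists_abs_fInvIntegrand_le hν0 hν1 (by positivity : 0 < t / 4)
  have hmeas : ∀ ρ x, AEStronglyMeasurable (fInvIntegrand ν ρ x) (volume.restrict (Ioi 0)) :=
    fun _ _ => continuousOn_fInvIntegrand.aestronglyMeasurable measurableSet_Ioi
  have hbound : ∀ᵐ u ∂volume.restrict (Ioi 0), ∀ x ∈ Metric.ball t (t / 2),
      ‖fInvIntegrand ν (ρ - 1) x u‖ ≤ C * (u ^ (-(ρ - 1)) * exp (-(t / 4) * u)) := by
    filter_upwards [self_mem_ae_restrict measurableSet_Ioi] with u hu x hx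
    rw [Metric.mem_ball, dist_comm, Real.dist_eq] at hx
    exact hC _ x u (by linarith [le_abs_self (t - x)]) (le_of_lt hu)
  have hdiff : ∀ᵐ u ∂volume.restrict (Ioi 0), ∀ x ∈ Metric.ball t (t / 2),
      HasDerivAt (fInvIntegrand ν ρ · u) (fInvIntegrand ν (ρ - 1) x u) x := by
    filter_upwards [self_mem_ae_restrict measurableSet_Ioi] with u hu x _
    exact hasDerivAt_fInvIntegrand_time hu
  have hderiv := hasDerivAt_integral_of_dominated_loc_of_deriv_le
    (F' := fun x u => fInvIntegrand ν (ρ - 1) x u)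
    (Metric.ball_mem_nhds t (half_pos ht)) (Eventually.of_forall (hmeas ρ))
    (integrableOn_fInvIntegrand hν0 hν1 hρ ht) (hmeas (ρ - 1) t) hbound
    ((integrableOn_rpow_mul_exp_neg_mul (by linarith) (by positivity)).const_mul C) hdiff
  exact hderiv.2.const_mul (1 / π)

theorem fInv_recurrence (ν μ : ℝ) (hν0 : 0 < ν) (hν1 : ν < 1) (hμ : μ < 1)
    (t : ℝ) (ht : 0 < t) :
    t * fInv ν (μ - 1) t = (μ - 1) * fInv ν μ t + ν * fInv ν (μ - ν) t ∧
    t * deriv (fInv ν μ) t = (μ - 1) * fInv ν μ t + ν * fInv ν (μ - ν) t := by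
  have hrec := mul_fInv_sub_one hν0.le hν1 hμ ht
  rw [(hasDerivAt_fInv hν0.le hν1 hμ ht).deriv]
  exact ⟨hrec, hrec⟩
end

section
/- For α > 0, β > 0, λ ∈ ℝ, and s > 0 with s^α > |λ|, the Laplace transform of t^{β-1} E_{α,β}(λ t^α) equals s^{α-β}/(s^α − λ), where E_{α,β}(z) = ∑_{k=0}^∞ z^k / Γ(kα + β). -/
open Real MeasureTheory Set

noncomputable def mittagLeffler2 (α β z : ℝ) : ℝ :=
  ∑' k : ℕ, z ^ k / Real.Gamma (k * α + β)

/-! Expanding the Mittag-Leffler function, the integrand is the series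
`∑ λᵏ / Γ(kα + β) · t^(kα + β - 1) e^(-st)`. Each term integrates to `λᵏ s^(-(kα + β))`
by the Gamma integral, and the series of absolute integrals is the geometric series with ratio
`|λ| s^(-α) < 1`, so integration may be done term by term; summing the geometric series
`s^(-β) ∑ (λ s^(-α))ᵏ` gives `s^(α - β) / (s^α - λ)`. -/

lemma integrableOn_rpow_mul_exp_neg_mul_Ioi {a r : ℝ} (ha : 0 < a) (hr : 0 < r) :
    IntegrableOn (fun t : ℝ => t ^ (a - 1) * exp (-(r * t))) (Ioi 0) := by
  simpa [rpow_one] using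
    integrableOn_rpow_mul_exp_neg_mul_rpow (p := 1) (s := a - 1) (by linarith) one_pos hr

theorem integral_tsum_mul_rpow_mul_exp_neg_mul_Ioi {ι : Type*} [Countable ι] {c γ : ι → ℝ}
    {r : ℝ} (hγ : ∀ k, 0 < γ k) (hr : 0 < r)
    (hsum : Summable fun k => |c k| * ((1 / r) ^ γ k * Gamma (γ k))) :
    ∫ t in Ioi 0, ∑' k, c k * (t ^ (γ k - 1) * exp (-(r * t))) =
      ∑' k, c k * ((1 / r) ^ γ k * Gamma (γ k)) := by
  have hint k : IntegrableOn (fun t => c k * (t ^ (γ k - 1) * exp (-(r * t)))) (Ioi 0) :=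
    (integrableOn_rpow_mul_exp_neg_mul_Ioi (hγ k) hr).const_mul _
  have hnorm k : ∫ t in Ioi 0, ‖c k * (t ^ (γ k - 1) * exp (-(r * t)))‖ =
      |c k| * ((1 / r) ^ γ k * Gamma (γ k)) := by
    rw [← integral_rpow_mul_exp_neg_mul_Ioi (hγ k) hr, ← integral_const_mul]
    refine setIntegral_congr_fun measurableSet_Ioi fun t ht => ?_
    simp [abs_of_nonneg (rpow_nonneg (le_of_lt ht) _)]
  rw [← integral_tsum_of_summable_integral_norm hint (by simpa only [hnorm] using hsum)]
  exact tsum_congr fun k => by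
    rw [integral_const_mul, integral_rpow_mul_exp_neg_mul_Ioi (hγ k) hr]

lemma rpow_sub_one_mul_mittagLeffler2 (α β lam : ℝ) {t : ℝ} (ht : 0 < t) :
    t ^ (β - 1) * mittagLeffler2 α β (lam * t ^ α) =
      ∑' k : ℕ, lam ^ k / Gamma (k * α + β) * t ^ (k * α + β - 1) := by
  rw [mittagLeffler2, ← tsum_mul_left]
  refine tsum_congr fun k => ?_
  rw [mul_pow, ← rpow_natCast (t ^ α), ← rpow_mul ht.le,
    show (k : ℝ) * α + β - 1 = β - 1 + α * k by ring, rpow_add ht]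
  ring

lemma one_div_rpow_nat_mul_add {s : ℝ} (hs : 0 < s) (α β : ℝ) (k : ℕ) :
    (1 / s) ^ (k * α + β) = ((1 / s) ^ α) ^ k * (1 / s) ^ β := by
  rw [rpow_add (by positivity), mul_comm (k : ℝ), rpow_mul (by positivity), rpow_natCast]

lemma abs_mul_one_div_rpow_lt_one {s α lam : ℝ} (hs : 0 < s) (hlam : |lam| < s ^ α) :
    |lam| * (1 / s) ^ α < 1 := by
  rw [one_div, inv_rpow hs.le, ← div_eq_mul_inv]
  exact (div_lt_one (by positivity)).2 hlam

lemma tsum_geometric_mul_one_div_rpow {s α β lam : ℝ} (hs : 0 < s) (hlam : |lam| < s ^ α) :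
    ∑' k : ℕ, (lam * (1 / s) ^ α) ^ k * (1 / s) ^ β = s ^ (α - β) / (s ^ α - lam) := by
  have hne : s ^ α - lam ≠ 0 := by linarith [le_abs_self lam]
  have hsα : s ^ α ≠ 0 := by positivity
  have hq : |lam * (1 / s) ^ α| < 1 := by
    rw [abs_mul, abs_of_pos (rpow_pos_of_pos (one_div_pos.2 hs) α)]
    exact abs_mul_one_div_rpow_lt_one hs hlam
  rw [tsum_mul_right, tsum_geometric_of_abs_lt_one hq,
    one_div, inv_rpow hs.le, inv_rpow hs.le, rpow_sub hs]
  field_simp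

theorem laplace_mittagLeffler2 (α β lam : ℝ) (hα : 0 < α) (hβ : 0 < β) :
    ∀ s : ℝ, 0 < s → |lam| < s ^ α →
      ∫ t in Ioi (0 : ℝ),
          Real.exp (-s * t) * (t ^ (β - 1) * mittagLeffler2 α β (lam * t ^ α)) =
        s ^ (α - β) / (s ^ α - lam) := by
  intro s hs hlam
  have hγ (k : ℕ) : 0 < (k : ℝ) * α + β := by positivity
  have hterm (x : ℝ) (k : ℕ) : x ^ k / Gamma (k * α + β) *
      ((1 / s) ^ (k * α + β) * Gamma (k * α + β)) = (x * (1 / s) ^ α) ^ k * (1 / s) ^ β := by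
    rw [div_mul_comm, mul_div_cancel_right₀ _ (Gamma_pos_of_pos (hγ k)).ne',
      one_div_rpow_nat_mul_add hs, mul_pow]
    ring
  have hsum : Summable fun k : ℕ => |lam ^ k / Gamma (k * α + β)| *
      ((1 / s) ^ (k * α + β) * Gamma (k * α + β)) := by
    simp_rw [abs_div, abs_pow, abs_of_pos (Gamma_pos_of_pos (hγ _)), hterm]
    exact (summable_geometric_of_lt_one (by positivity)
      (abs_mul_one_div_rpow_lt_one hs hlam)).mul_right _
  calc _ = ∫ t in Ioi 0, ∑' k : ℕ,
          lam ^ k / Gamma (k * α + β) * (t ^ (k * α + β - 1) * exp (-(s * t))) :=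
        setIntegral_congr_fun measurableSet_Ioi fun t ht => by
          rw [neg_mul, rpow_sub_one_mul_mittagLeffler2 α β lam ht, ← tsum_mul_left]
          exact tsum_congr fun k => by ring
    _ = ∑' k : ℕ, (lam * (1 / s) ^ α) ^ k * (1 / s) ^ β := by
        rw [integral_tsum_mul_rpow_mul_exp_neg_mul_Ioi hγ hs hsum]
        simp_rw [hterm]
    _ = s ^ (α - β) / (s ^ α - lam) := tsum_geometric_mul_one_div_rpow hs hlam
end

section
/- For λ > 0 and s > max(λ, 1), the Laplace transform of the Volterra function ν(λt) = ∫_0^∞ (λt)^u / Γ(u+1) du equals 1/(s · ln(s/λ)). -/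
/-!
Since `ν(λt)` is an integral of the nonnegative kernel `(λt)^u / Γ(u+1)`, Tonelli–Fubini lets us
integrate in `t` first. The inner integral is the Laplace transform of a power,
`∫ e^{-st} (λt)^u dt = Γ(u+1) (λ/s)^u / s`, which cancels the Gamma factor, and what remains is the
exponential integral `∫_0^∞ (λ/s)^u du / s = 1 / (s log(s/λ))`, convergent because `λ < s`.
-/

open Real MeasureTheory Set

noncomputable def volterraNu (x : ℝ) : ℝ :=
  ∫ u in Ioi (0 : ℝ), x ^ u / Real.Gamma (u + 1)

theorem integral_integral_swap_of_nonneg {α β : Type*} [MeasurableSpace α] [MeasurableSpace β]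
    {μ : Measure α} {ν : Measure β} [SFinite μ] [SFinite ν] {f : α → β → ℝ}
    (hf : AEStronglyMeasurable (Function.uncurry f) (μ.prod ν))
    (hf_nonneg : ∀ᵐ y ∂ν, 0 ≤ᵐ[μ] fun x => f x y)
    (hf_int : ∀ᵐ y ∂ν, Integrable (fun x => f x y) μ)
    (hf_int_int : Integrable (fun y => ∫ x, f x y ∂μ) ν) :
    ∫ x, ∫ y, f x y ∂ν ∂μ = ∫ y, ∫ x, f x y ∂μ ∂ν := by
  refine integral_integral_swap ((integrable_prod_iff' hf).2 ⟨hf_int, hf_int_int.congr ?_⟩)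
  filter_upwards [hf_nonneg] with y hy
  exact integral_congr_ae (hy.mono fun x hx => (Real.norm_of_nonneg hx).symm)

theorem Real.continuousOn_Gamma_Ioi : ContinuousOn Gamma (Ioi 0) := fun _ hx =>
  (differentiableAt_Gamma fun m => by
    linarith [mem_Ioi.1 hx, (Nat.cast_nonneg m : (0 : ℝ) ≤ m)]).continuousAt.continuousWithinAt

theorem continuousOn_exp_neg_mul_mul_rpow_div_Gamma (s lam : ℝ) :
    ContinuousOn (fun p : ℝ × ℝ => exp (-s * p.1) * (lam * p.1) ^ p.2 / Gamma (p.2 + 1))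
      (univ ×ˢ Ioi 0) := by
  have hGamma : ContinuousOn (fun p : ℝ × ℝ => Gamma (p.2 + 1)) (univ ×ˢ Ioi 0) :=
    continuousOn_Gamma_Ioi.comp (by fun_prop) fun p hp => by
      simp only [mem_prod, mem_Ioi] at hp ⊢; linarith
  refine ((by fun_prop : Continuous fun p : ℝ × ℝ => exp (-s * p.1)).continuousOn.mul
    (ContinuousOn.rpow (by fun_prop) (by fun_prop) fun p hp => Or.inr hp.2)).div hGamma
    fun p hp => (Gamma_pos_of_pos ?_).ne'
  linarith [mem_Ioi.1 hp.2]

theorem integrableOn_exp_neg_mul_mul_rpow {s lam u : ℝ} (hlam : 0 ≤ lam) (hs : 0 < s)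
    (hu : -1 < u) : IntegrableOn (fun t => exp (-s * t) * (lam * t) ^ u) (Ioi 0) := by
  refine IntegrableOn.congr_fun ((integrableOn_rpow_mul_exp_neg_mul_rpow hu one_pos hs).const_mul
    (lam ^ u)) (fun t ht => ?_) measurableSet_Ioi
  rw [rpow_one, mul_rpow hlam (le_of_lt ht)]
  ring

theorem integral_exp_neg_mul_mul_rpow {s lam u : ℝ} (hlam : 0 ≤ lam) (hs : 0 < s)
    (hu : -1 < u) :
    ∫ t in Ioi 0, exp (-s * t) * (lam * t) ^ u = Gamma (u + 1) * (lam / s) ^ u / s := by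
  have hGamma := integral_rpow_mul_exp_neg_mul_Ioi (by linarith : 0 < u + 1) hs
  rw [add_sub_cancel_right] at hGamma
  calc ∫ t in Ioi 0, exp (-s * t) * (lam * t) ^ u
      = lam ^ u * ∫ t in Ioi 0, t ^ u * exp (-(s * t)) := by
        rw [← integral_const_mul]
        refine setIntegral_congr_fun measurableSet_Ioi fun t ht => ?_
        rw [mul_rpow hlam (le_of_lt ht), neg_mul]
        ring
    _ = Gamma (u + 1) * (lam / s) ^ u / s := by
        rw [hGamma, rpow_add_one (by positivity), div_rpow hlam hs.le, one_div, inv_rpow hs.le]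
        field_simp

theorem integral_exp_neg_mul_mul_rpow_div_Gamma {s lam u : ℝ} (hlam : 0 ≤ lam) (hs : 0 < s)
    (hu : -1 < u) :
    ∫ t in Ioi 0, exp (-s * t) * (lam * t) ^ u / Gamma (u + 1) = (lam / s) ^ u / s := by
  rw [integral_div, integral_exp_neg_mul_mul_rpow hlam hs hu,
    mul_div_assoc, mul_div_cancel_left₀ _ (Gamma_pos_of_pos (by linarith)).ne']

theorem integrableOn_const_rpow_Ioi {q : ℝ} (hq₀ : 0 < q) (hq₁ : q < 1) (c : ℝ) :
    IntegrableOn (fun u => q ^ u) (Ioi c) := by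
  simpa only [← rpow_def_of_pos hq₀] using integrableOn_exp_mul_Ioi (log_neg hq₀ hq₁) c

theorem integral_const_rpow_Ioi {q : ℝ} (hq₀ : 0 < q) (hq₁ : q < 1) (c : ℝ) :
    ∫ u in Ioi c, q ^ u = -q ^ c / log q := by
  simpa only [← rpow_def_of_pos hq₀] using integral_exp_mul_Ioi (log_neg hq₀ hq₁) c

theorem integral_exp_neg_mul_volterraNu {s lam : ℝ} (hlam : 0 ≤ lam) (hs : 0 < s)
    (hint : IntegrableOn (fun u : ℝ => (lam / s) ^ u) (Ioi 0)) :
    ∫ t in Ioi 0, exp (-s * t) * volterraNu (lam * t) =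
      (∫ u : ℝ in Ioi 0, (lam / s) ^ u) / s := by
  have hinner : ∀ u ∈ Ioi (0 : ℝ),
      ∫ t in Ioi 0, exp (-s * t) * (lam * t) ^ u / Gamma (u + 1) = (lam / s) ^ u / s :=
    fun u hu => integral_exp_neg_mul_mul_rpow_div_Gamma hlam hs (by linarith [mem_Ioi.1 hu])
  calc ∫ t in Ioi 0, exp (-s * t) * volterraNu (lam * t)
      = ∫ t in Ioi 0, ∫ u in Ioi 0, exp (-s * t) * (lam * t) ^ u / Gamma (u + 1) := by
        simp_rw [volterraNu, ← integral_const_mul, mul_div_assoc]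
    _ = ∫ u in Ioi 0, ∫ t in Ioi 0, exp (-s * t) * (lam * t) ^ u / Gamma (u + 1) := by
        refine integral_integral_swap_of_nonneg ?_ ?_ ?_ ?_
        · rw [Measure.prod_restrict]
          exact ((continuousOn_exp_neg_mul_mul_rpow_div_Gamma s lam).mono
            (prod_mono (subset_univ _) subset_rfl)).aestronglyMeasurable
            (measurableSet_Ioi.prod measurableSet_Ioi)
        · filter_upwards [ae_restrict_mem measurableSet_Ioi] with u hu
          filter_upwards [ae_restrict_mem measurableSet_Ioi] with t ht
          have := Gamma_pos_of_pos (by linarith [mem_Ioi.1 hu] : 0 < u + 1)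
          have := mem_Ioi.1 ht
          positivity
        · filter_upwards [ae_restrict_mem measurableSet_Ioi] with u hu
          exact (integrableOn_exp_neg_mul_mul_rpow hlam hs
            (by linarith [mem_Ioi.1 hu])).div_const _
        · exact IntegrableOn.congr_fun (hint.div_const s)
            (fun u hu => (hinner u hu).symm) measurableSet_Ioi
    _ = (∫ u : ℝ in Ioi 0, (lam / s) ^ u) / s := by
        rw [setIntegral_congr_fun measurableSet_Ioi hinner, integral_div]

theorem laplace_volterraNu (lam : ℝ) (hlam : 0 < lam) :
    ∀ s : ℝ, max lam 1 < s →
      ∫ t in Ioi (0 : ℝ), Real.exp (-s * t) * volterraNu (lam * t) =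
        1 / (s * Real.log (s / lam)) := by
  intro s hs
  have hlam_s : lam < s := (le_max_left lam 1).trans_lt hs
  have hs₀ : 0 < s := hlam.trans hlam_s
  have hq₀ : 0 < lam / s := div_pos hlam hs₀
  have hq₁ : lam / s < 1 := (div_lt_one hs₀).2 hlam_s
  have hlog : log (lam / s) = -log (s / lam) := by rw [← log_inv, inv_div]
  rw [integral_exp_neg_mul_volterraNu hlam.le hs₀ (integrableOn_const_rpow_Ioi hq₀ hq₁ 0),
    integral_const_rpow_Ioi hq₀ hq₁, rpow_zero, hlog]
  field_simp
end

section
/- For ρ > 0, t > 0: t · ν(t, ρ) = (ρ+1) ν(t, ρ+1) + μ(t, 1, ρ+1), where ν(t,α) = ∫_0^∞ t^{u+α}/Γ(u+α+1) du and μ(t,β,α) = ∫_0^∞ u^β t^{u+α} / (Γ(β+1)Γ(u+α+1)) du. -/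
/-! Since `Γ (y + 2) = (y + 1) Γ (y + 1)`, the integrands satisfy the pointwise recurrence
`t · t ^ (u + ρ) / Γ (u + ρ + 1) = (ρ + 1 + u) · t ^ (u + ρ + 1) / Γ (u + ρ + 2)`; integrating in `u`
gives the identity. Everything is integrable because `t ^ y / Γ (y + 1) ≤ exp (e t - y)` for `y ≥ 0`,
a bound coming from the tail of Euler's integral for `Γ`. -/

open Real MeasureTheory Set

noncomputable def volterraNu2 (t α : ℝ) : ℝ :=
  ∫ u in Ioi (0 : ℝ), t ^ (u + α) / Real.Gamma (u + α + 1)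

noncomputable def volterraMu (t β α : ℝ) : ℝ :=
  ∫ u in Ioi (0 : ℝ), u ^ β * t ^ (u + α) / (Real.Gamma (β + 1) * Real.Gamma (u + α + 1))

namespace Real

lemma continuousOn_Gamma_Ioi_s17 : ContinuousOn Gamma (Ioi 0) := fun x hx =>
  (differentiableAt_Gamma fun m => by
    have : (0 : ℝ) ≤ m := m.cast_nonneg
    rw [mem_Ioi] at hx
    linarith).continuousAt.continuousWithinAt

/-- Keep only the tail `∫_a^∞` of Euler's integral, where `s ^ (x - 1) ≥ a ^ (x - 1)`. -/
lemma rpow_sub_one_le_exp_mul_Gamma {x a : ℝ} (hx : 1 ≤ x) (ha : 0 ≤ a) :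
    a ^ (x - 1) ≤ exp a * Gamma x := by
  have hint := GammaIntegral_convergent (by linarith : 0 < x)
  have hsub : Ioi a ⊆ Ioi 0 := Ioi_subset_Ioi ha
  have htail : exp (-a) * a ^ (x - 1) ≤ ∫ s in Ioi a, exp (-s) * s ^ (x - 1) := by
    rw [← integral_exp_neg_Ioi, ← integral_mul_const]
    refine setIntegral_mono_on ((integrableOn_exp_neg_Ioi a).mul_const _) (hint.mono_set hsub)
      measurableSet_Ioi fun s hs => ?_
    exact mul_le_mul_of_nonneg_left (rpow_le_rpow ha (le_of_lt hs) (by linarith)) (exp_pos _).le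
  have hwhole : ∫ s in Ioi a, exp (-s) * s ^ (x - 1) ≤ Gamma x := by
    rw [Gamma_eq_integral (by linarith)]
    refine setIntegral_mono_set hint ?_ hsub.eventuallyLE
    filter_upwards [ae_restrict_mem measurableSet_Ioi] with s (hs : 0 < s)
    positivity
  calc a ^ (x - 1) = exp a * (exp (-a) * a ^ (x - 1)) := by rw [← mul_assoc, ← exp_add]; simp
    _ ≤ exp a * Gamma x := by gcongr; exact htail.trans hwhole

lemma rpow_div_Gamma_add_one_le {t y : ℝ} (ht : 0 < t) (hy : 0 ≤ y) :
    t ^ y / Gamma (y + 1) ≤ exp (exp 1 * t) * exp (-y) := by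
  have hΓ : 0 < Gamma (y + 1) := Gamma_pos_of_pos (by linarith)
  have hbound := rpow_sub_one_le_exp_mul_Gamma (by linarith : 1 ≤ y + 1)
    (by positivity : 0 ≤ exp 1 * t)
  -- scaling by `a = e t` turns `(t / a) ^ y` into `exp (-y)`
  have hscale : t ^ y = (exp 1 * t) ^ y * exp (-y) := by
    rw [mul_rpow (exp_pos 1).le ht.le, ← exp_mul, one_mul, mul_comm, ← mul_assoc, ← exp_add]
    simp
  rw [add_sub_cancel_right] at hbound
  rw [div_le_iff₀ hΓ, hscale, mul_right_comm]
  gcongr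

end Real

lemma integrableOn_rpow_mul_rpow_div_Gamma {t α β : ℝ} (ht : 0 < t) (hα : 0 ≤ α)
    (hβ : -1 < β) :
    IntegrableOn (fun u => u ^ β * (t ^ (u + α) / Gamma (u + α + 1))) (Ioi 0) := by
  have hdom := (GammaIntegral_convergent (by linarith : 0 < β + 1)).const_mul (exp (exp 1 * t))
  rw [add_sub_cancel_right] at hdom
  have hcont : ContinuousOn (fun u => u ^ β * (t ^ (u + α) / Gamma (u + α + 1))) (Ioi 0) := by
    refine fun u (hu : 0 < u) => ContinuousAt.continuousWithinAt ?_
    have hΓ : ContinuousAt (fun u => Gamma (u + α + 1)) u :=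
      (continuousOn_Gamma_Ioi_s17.continuousAt (Ioi_mem_nhds (by linarith))).comp (by fun_prop)
    exact (continuousAt_id.rpow_const (Or.inl hu.ne')).mul
      (((continuousAt_const_rpow ht.ne').comp (by fun_prop)).div hΓ
        (Gamma_pos_of_pos (by linarith)).ne')
  refine hdom.mono' (hcont.aestronglyMeasurable measurableSet_Ioi) ?_
  filter_upwards [ae_restrict_mem measurableSet_Ioi] with u (hu : 0 < u)
  have hΓ : 0 < Gamma (u + α + 1) := Gamma_pos_of_pos (by linarith)
  rw [norm_of_nonneg (by positivity)]
  calc u ^ β * (t ^ (u + α) / Gamma (u + α + 1))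
      ≤ u ^ β * (exp (exp 1 * t) * exp (-u)) := by
        gcongr
        refine (rpow_div_Gamma_add_one_le ht (by positivity)).trans ?_
        gcongr
        linarith
    _ = exp (exp 1 * t) * (exp (-u) * u ^ β) := by ring

lemma mul_rpow_div_Gamma_add_one {t y : ℝ} (ht : 0 < t) (hy : y + 1 ≠ 0) :
    t * (t ^ y / Gamma (y + 1)) = (y + 1) * (t ^ (y + 1) / Gamma (y + 1 + 1)) := by
  rw [Gamma_add_one hy, ← mul_div_assoc (y + 1), mul_div_mul_left _ _ hy, rpow_add_one ht.ne']
  ring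

theorem volterra_identity (ρ t : ℝ) (hρ : 0 < ρ) (ht : 0 < t) :
    t * volterraNu2 t ρ = (ρ + 1) * volterraNu2 t (ρ + 1) + volterraMu t 1 (ρ + 1) := by
  have hα : 0 ≤ ρ + 1 := by linarith
  have hμ : volterraMu t 1 (ρ + 1) =
      ∫ u in Ioi 0, u ^ (1 : ℝ) * (t ^ (u + (ρ + 1)) / Gamma (u + (ρ + 1) + 1)) := by
    simp only [volterraMu, one_add_one_eq_two, Gamma_two, one_mul, mul_div_assoc]
  have hν_int := integrableOn_rpow_mul_rpow_div_Gamma ht hα (β := 0) (by norm_num)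
  simp only [rpow_zero, one_mul] at hν_int
  rw [volterraNu2, volterraNu2, hμ, ← integral_const_mul, ← integral_const_mul,
    ← integral_add (hν_int.const_mul _)
      (integrableOn_rpow_mul_rpow_div_Gamma ht hα (by norm_num))]
  refine setIntegral_congr_fun measurableSet_Ioi fun u (hu : 0 < u) => ?_
  rw [rpow_one, ← add_mul, add_assoc u, ← add_assoc u,
    mul_rpow_div_Gamma_add_one ht (by positivity)]
  ring
end
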